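/- arXiv:math/0701018 — 5 statements merged into one kernel-verified Lean document; each statement's English description precedes it below -/
import Mathlib

section
/- Let n ≥ 1 and fix signs ε₁,…,ε₍ₙ₋₁₎ ∈ {−1,1} and k ∈ ℤ_{2n+1}. Then the set S = {(x₁,…,x₍ₙ₋₁₎, k + Σ_{i=1}^{n−1} εᵢ·(i+1)·xᵢ) : xᵢ ∈ ℤ_{2n+1}} (arithmetic in ℤ_{2n+1}) is a perfect dominating set of the graph Γ(ℤ_{2n+1}ⁿ, 𝒰). -/
/-!
The set is the level set `f = k` of a linear form `f` whose coefficients are `±1, ±2, …, ±n`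
in some order. The closed neighbourhood of `v` is `v + {0, ±e₁, …, ±eₙ}`, on which `f` takes the
values `f v + {0, ±1, …, ±n}`, i.e. every residue modulo `2n + 1` exactly once; so exactly one
vertex of the closed neighbourhood lies on the level set.
-/

/-- The Cayley graph Γ(ℤ_{2n+1}ⁿ, 𝒰) with 𝒰 = {±e₁,…,±eₙ}. -/
def cay (n : ℕ) : SimpleGraph (Fin n → ZMod (2 * n + 1)) where
  Adj x y := ∃ i : Fin n, x - y = Pi.single i 1 ∨ y - x = Pi.single i 1
  symm := by
    constructor
    rintro x y ⟨i, h | h⟩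
    · exact ⟨i, Or.inr h⟩
    · exact ⟨i, Or.inl h⟩
  loopless := by
    constructor
    rintro x ⟨i, h | h⟩ <;>
    · have hn : 0 < n := i.pos
      haveI : Fact (1 < 2 * n + 1) := ⟨by omega⟩
      simp only [sub_self] at h
      have h1 := congrFun h i
      rw [Pi.zero_apply, Pi.single_eq_same] at h1
      exact one_ne_zero h1.symm

instance (n : ℕ) : DecidableRel (cay n).Adj :=
  fun x y => Fintype.decidableExistsFintype (p := fun i : Fin n =>
    x - y = Pi.single i 1 ∨ y - x = Pi.single i 1)

/-- `S` is a dominating set of `G`. -/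
def Dom {V : Type*} (G : SimpleGraph V) (S : Set V) : Prop :=
  ∀ v : V, ∃ u ∈ S, u = v ∨ G.Adj u v

/-- `S` is a perfect dominating set of `G`: every vertex is dominated by
exactly one element of `S`. -/
def PerfDom {V : Type*} (G : SimpleGraph V) (S : Set V) : Prop :=
  ∀ v : V, ∃! u : V, u ∈ S ∧ (u = v ∨ G.Adj u v)

theorem perfDom_preimage_singleton_of_bijOn {V B : Type*} [AddCommGroup V] [AddCommGroup B]
    {G : SimpleGraph V} {D : Set V} (hD : ∀ u v, u = v ∨ G.Adj u v ↔ u - v ∈ D)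
    {f : V →+ B} (hf : Set.BijOn f D Set.univ) (k : B) :
    PerfDom G (f ⁻¹' {k}) := by
  intro v
  have hdom : ∀ u, u ∈ f ⁻¹' {k} ∧ (u = v ∨ G.Adj u v) ↔ u - v ∈ D ∧ f (u - v) = k - f v := by
    intro u
    rw [hD, map_sub, sub_left_inj, Set.mem_preimage, Set.mem_singleton_iff, and_comm]
  obtain ⟨δ, hδD, hδ⟩ := hf.surjOn (Set.mem_univ (k - f v))
  refine ⟨v + δ, (hdom _).2 (by simpa using ⟨hδD, hδ⟩), fun u hu => ?_⟩
  obtain ⟨huD, hu⟩ := (hdom u).1 hu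
  exact sub_eq_iff_eq_add'.1 (hf.injOn huD hδD (hu.trans hδ.symm))

/-- The generating set `𝒰 = {±eᵢ}` of the Cayley graph. -/
def signedUnitVectors (ι R : Type*) [Fintype ι] [DecidableEq ι] [Ring R] [DecidableEq R] :
    Finset (ι → R) :=
  Finset.univ.image (fun i => Pi.single i 1) ∪ Finset.univ.image (fun i => -Pi.single i 1)

section signedUnitVectors

variable {ι R : Type*} [Fintype ι] [DecidableEq ι] [Ring R] [DecidableEq R]

theorem mem_signedUnitVectors {δ : ι → R} :
    δ ∈ signedUnitVectors ι R ↔ ∃ i, δ = Pi.single i 1 ∨ δ = -Pi.single i 1 := by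
  simp only [signedUnitVectors, Finset.mem_union, Finset.mem_image, Finset.mem_univ, true_and]
  grind

theorem card_signedUnitVectors_le : (signedUnitVectors ι R).card ≤ 2 * Fintype.card ι :=
  (Finset.card_union_le _ _).trans (by
    rw [two_mul]; exact add_le_add Finset.card_image_le Finset.card_image_le)

end signedUnitVectors

theorem cay_dominates_iff {n : ℕ} (u v : Fin n → ZMod (2 * n + 1)) :
    u = v ∨ (cay n).Adj u v ↔ u - v ∈ insert 0 (signedUnitVectors (Fin n) (ZMod (2 * n + 1))) := by
  rw [Finset.mem_insert, mem_signedUnitVectors, sub_eq_zero]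
  exact or_congr_right (exists_congr fun i => or_congr_right (by rw [← neg_sub v u, neg_inj]))

theorem ZMod.exists_eq_natCast_or_eq_neg_natCast {n : ℕ} (x : ZMod (2 * n + 1)) :
    ∃ a ≤ n, x = a ∨ x = -a := by
  refine ⟨x.valMinAbs.natAbs, by have := x.natAbs_valMinAbs_le; omega, ?_⟩
  have hx := x.coe_valMinAbs
  rcases Int.natAbs_eq x.valMinAbs with h | h <;> rw [h] at hx
  · exact Or.inl (by simpa using hx.symm)
  · exact Or.inr (by simpa using hx.symm)

theorem bijOn_linearCombination_signedUnitVectors {ι : Type*} [Fintype ι] [DecidableEq ι]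
    {n : ℕ} (hι : Fintype.card ι = n) (c : ι → ZMod (2 * n + 1))
    (hc : ∀ a : ℕ, 1 ≤ a → a ≤ n → ∃ i, c i = a ∨ c i = -a) :
    Set.BijOn (Fintype.linearCombination (ZMod (2 * n + 1)) c).toAddMonoidHom
      (insert 0 (signedUnitVectors ι (ZMod (2 * n + 1))) : Finset _) Set.univ := by
  set f := (Fintype.linearCombination (ZMod (2 * n + 1)) c).toAddMonoidHom
  set D := insert 0 (signedUnitVectors ι (ZMod (2 * n + 1)))
  have hsurj : Set.SurjOn f D Set.univ := by
    intro x _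
    obtain ⟨a, ha, hx⟩ := ZMod.exists_eq_natCast_or_eq_neg_natCast x
    obtain rfl | ha₀ := Nat.eq_zero_or_pos a
    · exact ⟨0, Finset.mem_insert_self _ _, by rcases hx with rfl | rfl <;> simp⟩
    obtain ⟨i, hi⟩ := hc a ha₀ ha
    have hxi : x = c i ∨ x = -c i := by
      rcases hx with rfl | rfl <;> rcases hi with h | h <;> simp [h]
    have hD : ∀ δ, δ = Pi.single i 1 ∨ δ = -Pi.single i 1 → δ ∈ D :=
      fun δ hδ => Finset.mem_insert_of_mem (mem_signedUnitVectors.2 ⟨i, hδ⟩)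
    rcases hxi with rfl | rfl
    · exact ⟨Pi.single i 1, hD _ (Or.inl rfl), by simp [f]⟩
    · exact ⟨-Pi.single i 1, hD _ (Or.inr rfl), by simp [f]⟩
  -- `D` has at most `2n + 1 = |ZMod (2n+1)|` elements, so a surjection from it is injective.
  have himage : D.image f = Finset.univ :=
    Finset.eq_univ_of_forall fun x => by simpa using hsurj (Set.mem_univ x)
  have hcard : (D.image f).card = D.card := by
    refine le_antisymm Finset.card_image_le ?_
    have := card_signedUnitVectors_le (ι := ι) (R := ZMod (2 * n + 1))
    rw [himage, Finset.card_univ, ZMod.card]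
    exact (Finset.card_insert_le _ _).trans (by omega)
  exact ⟨Set.mapsTo_univ _ _, Finset.card_image_iff.1 hcard, hsurj⟩

section signedWeights

variable {R : Type*} {m : ℕ} (ε : Fin m → R)

/-- The coefficients of the linear form `vₙ - Σᵢ εᵢ (i+1) vᵢ`; up to sign they are `1, 2, …, n`. -/
def signedWeights [Ring R] : Fin (m + 1) → R :=
  Fin.lastCases 1 fun i => -(ε i * ((i : ℕ) + 2))

theorem exists_signedWeights_eq_or_eq_neg [Ring R] (hε : ∀ i, ε i = 1 ∨ ε i = -1) {a : ℕ}
    (ha₁ : 1 ≤ a) (ha : a ≤ m + 1) :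
    ∃ j, signedWeights ε j = a ∨ signedWeights ε j = -a := by
  obtain rfl | ha₂ := eq_or_lt_of_le ha₁
  · exact ⟨Fin.last m, Or.inl (by simp [signedWeights])⟩
  refine ⟨(⟨a - 2, by omega⟩ : Fin m).castSucc, ?_⟩
  have hcast : ((a - 2 : ℕ) : R) + 2 = a := by
    rw [Nat.cast_sub (by omega), Nat.cast_ofNat, sub_add_cancel]
  rw [signedWeights, Fin.lastCases_castSucc]
  rcases hε ⟨a - 2, by omega⟩ with h | h <;> simp [h, hcast]

theorem linearCombination_signedWeights_eq_iff [CommRing R] (v : Fin (m + 1) → R) (k : R) :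
    Fintype.linearCombination R (signedWeights ε) v = k ↔
      v (Fin.last m) = k + ∑ i : Fin m, ε i * ((i : ℕ) + 2) * v i.castSucc := by
  have hsum : ∑ i : Fin m, v i.castSucc • signedWeights ε i.castSucc =
      -∑ i : Fin m, ε i * ((i : ℕ) + 2) * v i.castSucc := by
    rw [← Finset.sum_neg_distrib]
    exact Finset.sum_congr rfl fun i _ => by simp [signedWeights, mul_comm]
  rw [Fintype.linearCombination_apply, Fin.sum_univ_castSucc, hsum]
  simp only [signedWeights, Fin.lastCases_last, smul_eq_mul, mul_one]
  constructor <;> intro h <;> linear_combination h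

end signedWeights

/-- Coordinate `i ∈ {1,…,n−1}` of the paper, with coefficient `i+1`, is the 0-based index
`i : Fin m` here, with coefficient `i + 2`. -/
theorem stmt0 (m : ℕ) (ε : Fin m → ZMod (2 * (m + 1) + 1))
    (hε : ∀ i, ε i = 1 ∨ ε i = -1) (k : ZMod (2 * (m + 1) + 1)) :
    PerfDom (cay (m + 1))
      {v : Fin (m + 1) → ZMod (2 * (m + 1) + 1) |
        v (Fin.last m) = k + ∑ i : Fin m, ε i * ((i : ℕ) + 2) * v i.castSucc} := by
  convert perfDom_preimage_singleton_of_bijOn cay_dominates_iff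
    (bijOn_linearCombination_signedUnitVectors (Fintype.card_fin _) _
      fun _ => exists_signedWeights_eq_or_eq_neg ε hε) k using 1
  ext v
  exact (linearCombination_signedWeights_eq_iff ε v k).symm
end

section
/- For every n ≥ 1, the domination number of Γ(ℤ_{2n+1}ⁿ, 𝒰) equals (2n+1)^{n−1}; that is, the minimum size of a dominating set of this graph is (2n+1)^{n−1}. -/
def weight {R : Type*} [Semiring R] (n : ℕ) : (Fin n → R) →+ R where
  toFun x := ∑ i : Fin n, ((i : ℕ) + 1 : R) * x i
  map_zero' := by simp
  map_add' x y := by simp only [Pi.add_apply, mul_add, Finset.sum_add_distrib]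

section weight

variable {R : Type*} [Semiring R] {n : ℕ}

lemma weight_single (i : Fin n) (c : R) : weight n (Pi.single i c) = ((i : ℕ) + 1) * c := by
  simp [weight, Pi.single_apply]

lemma weight_surjective (hn : 0 < n) : Function.Surjective (weight (R := R) n) := fun c =>
  ⟨Pi.single ⟨0, hn⟩ c, by simp [weight_single]⟩

end weight

lemma ZMod.eq_zero_or_eq_succ_or_eq_neg_succ {n : ℕ} (r : ZMod (2 * n + 1)) :
    r = 0 ∨ ∃ i : Fin n, r = (i : ℕ) + 1 ∨ r = -((i : ℕ) + 1) := by
  have hle : r.valMinAbs.natAbs ≤ n := by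
    simpa [show (2 * n + 1) / 2 = n by omega] using ZMod.natAbs_valMinAbs_le r
  rw [← ZMod.coe_valMinAbs r]
  obtain ⟨k, hk⟩ : ∃ k, r.valMinAbs.natAbs = k := ⟨_, rfl⟩
  rcases Nat.eq_zero_or_pos k with rfl | hpos
  · simp_all
  · refine Or.inr ⟨⟨k - 1, by omega⟩, ?_⟩
    have hcast : ((k - 1 : ℕ) : ZMod (2 * n + 1)) + 1 = k := by rw [Nat.cast_sub hpos]; ring
    rcases Int.natAbs_eq r.valMinAbs with h | h <;> rw [h, hk] <;> simp [hcast]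

lemma Dom.card_le_card_mul_maxDegree_add_one {V : Type*} [Fintype V] [DecidableEq V]
    {G : SimpleGraph V} [DecidableRel G.Adj] {S : Finset V} (hS : Dom G S) :
    Fintype.card V ≤ S.card * (G.maxDegree + 1) := by
  have hcover : Finset.univ ⊆ S.biUnion fun u => insert u (G.neighborFinset u) := by
    intro v _
    obtain ⟨u, hu, rfl | huv⟩ := hS v
    · exact Finset.mem_biUnion.2 ⟨u, hu, Finset.mem_insert_self _ _⟩
    · exact Finset.mem_biUnion.2
        ⟨u, hu, Finset.mem_insert_of_mem ((G.mem_neighborFinset u v).2 huv)⟩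
  calc Fintype.card V = (Finset.univ : Finset V).card := Finset.card_univ.symm
    _ ≤ _ := Finset.card_le_card hcover
    _ ≤ ∑ u ∈ S, (insert u (G.neighborFinset u)).card := Finset.card_biUnion_le
    _ ≤ ∑ _u ∈ S, (G.maxDegree + 1) := Finset.sum_le_sum fun u _ =>
        (Finset.card_insert_le _ _).trans (by simpa using G.degree_le_maxDegree u)
    _ = S.card * (G.maxDegree + 1) := by rw [Finset.sum_const, smul_eq_mul]

section cay

variable {n : ℕ}

lemma cay_adj_sub_single (v : Fin n → ZMod (2 * n + 1)) (i : Fin n) :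
    (cay n).Adj (v - Pi.single i 1) v :=
  ⟨i, Or.inr (sub_sub_self v _)⟩

lemma cay_adj_add_single (v : Fin n → ZMod (2 * n + 1)) (i : Fin n) :
    (cay n).Adj (v + Pi.single i 1) v :=
  ⟨i, Or.inl (add_sub_cancel_left v _)⟩

lemma cay_degree_le (v : Fin n → ZMod (2 * n + 1)) : (cay n).degree v ≤ 2 * n := by
  have hsub : (cay n).neighborFinset v ⊆ Finset.univ.image (fun i => v + Pi.single i 1) ∪
      Finset.univ.image (fun i => v - Pi.single i 1) := by
    intro w hw
    obtain ⟨i, h | h⟩ := ((cay n).mem_neighborFinset v w).1 hw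
    · exact Finset.mem_union_right _
        (Finset.mem_image.2 ⟨i, Finset.mem_univ _, by rw [← h, sub_sub_cancel]⟩)
    · exact Finset.mem_union_left _
        (Finset.mem_image.2 ⟨i, Finset.mem_univ _, by rw [← h, add_sub_cancel]⟩)
  calc (cay n).degree v = ((cay n).neighborFinset v).card :=
        ((cay n).card_neighborFinset_eq_degree v).symm
    _ ≤ _ := Finset.card_le_card hsub
    _ ≤ _ := Finset.card_union_le _ _
    _ ≤ n + n := add_le_add (Finset.card_image_le.trans (by simp))
        (Finset.card_image_le.trans (by simp))
    _ = 2 * n := by ring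

lemma pow_le_card_mul_of_dom_cay {S : Finset (Fin n → ZMod (2 * n + 1))}
    (hS : Dom (cay n) S) : (2 * n + 1) ^ n ≤ S.card * (2 * n + 1) := by
  calc (2 * n + 1) ^ n = Fintype.card (Fin n → ZMod (2 * n + 1)) := by simp [ZMod.card]
    _ ≤ S.card * ((cay n).maxDegree + 1) := hS.card_le_card_mul_maxDegree_add_one
    _ ≤ S.card * (2 * n + 1) := by
        gcongr; exact (cay n).maxDegree_le_of_forall_degree_le _ cay_degree_le

lemma dom_cay_setOf_weight_eq_zero : Dom (cay n) {x | weight n x = 0} := by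
  intro v
  rcases ZMod.eq_zero_or_eq_succ_or_eq_neg_succ (weight n v) with h | ⟨i, h | h⟩
  · exact ⟨v, h, Or.inl rfl⟩
  · exact ⟨v - Pi.single i 1, by simp [weight_single, h], Or.inr (cay_adj_sub_single v i)⟩
  · exact ⟨v + Pi.single i 1, by simp [weight_single, h], Or.inr (cay_adj_add_single v i)⟩

lemma card_filter_weight_eq_zero (hn : 0 < n) :
    (Finset.univ.filter fun x : Fin n → ZMod (2 * n + 1) => weight n x = 0).card
      = (2 * n + 1) ^ (n - 1) := by
  have hfilter : Nat.card (weight (R := ZMod (2 * n + 1)) n).ker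
      = (Finset.univ.filter fun x : Fin n → ZMod (2 * n + 1) => weight n x = 0).card := by
    rw [← Fintype.card_subtype, ← Nat.card_eq_fintype_card]; rfl
  have hker := (weight (R := ZMod (2 * n + 1)) n).ker.card_mul_index
  rw [AddSubgroup.index_ker, AddMonoidHom.range_eq_top.2 (weight_surjective hn), hfilter,
    AddSubgroup.card_top, Nat.card_fun, Nat.card_zmod, Nat.card_fin,
    ← pow_sub_one_mul hn.ne'] at hker
  exact Nat.eq_of_mul_eq_mul_right (by omega) hker

end cay

/-- For every `n ≥ 1` (written `n = m + 1`), the domination number of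
`Γ(ℤ_{2n+1}ⁿ, 𝒰)` is `(2n+1)^(n−1)`: it is the least cardinality of a dominating set. -/
theorem stmt2 (m : ℕ) :
    IsLeast {c : ℕ | ∃ S : Finset (Fin (m + 1) → ZMod (2 * (m + 1) + 1)),
        Dom (cay (m + 1)) ↑S ∧ S.card = c}
      ((2 * (m + 1) + 1) ^ m) := by
  refine ⟨⟨_, by simpa using dom_cay_setOf_weight_eq_zero, card_filter_weight_eq_zero m.succ_pos⟩,
    ?_⟩
  rintro c ⟨S, hS, rfl⟩
  have hbound := pow_le_card_mul_of_dom_cay hS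
  rw [pow_succ] at hbound
  exact Nat.le_of_mul_le_mul_right hbound (by omega)
end

section
/- Let p = 2n+1 be a prime and let S be a perfect dominating set of Γ(ℤ_pⁿ, 𝒰). Then every axis-parallel line meets S in exactly one point: for every (x₁,…,xₙ) ∈ ℤ_pⁿ and every i ∈ {1,…,n}, |S ∩ {(y₁,…,yₙ) ∈ ℤ_pⁿ : yⱼ = xⱼ for all j ≠ i}| = 1. -/
/-
Let `T(v)` count the points of `S` on the line through `v` in direction `eᵢ`, and `g = T - 1`.
Every translate `v + B` of the closed ball `B = {0, ±e₁, …, ±eₙ}` (of size `p = 2n + 1`) contains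
exactly one point of `S`; summing along the line gives `∑_{b ∈ B} g(v + b) = 0`. Hence each Fourier
coefficient `ĝ(ψ)` is killed by the factor `∑_{b ∈ B} ψ(-b)`, and also vanishes unless
`ψ(eᵢ) = 1`, as `g` is `eᵢ`-periodic. When `ψ(eᵢ) = 1` that factor is a sum of `p` `p`-th roots
of unity in which `1` occurs twice (at `0` and at `-eᵢ`); since the cyclotomic polynomial
`1 + X + ⋯ + X^(p-1)` is the minimal polynomial of a primitive root, such a sum vanishes only if
its `p` terms are distinct. So `ĝ = 0`, i.e. `T = 1`.
-/

open Finset Polynomial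

theorem IsPrimitiveRoot.eq_cyclotomic_of_aeval_eq_zero {K : Type*} [Field K] [CharZero K]
    {p : ℕ} [hp : Fact p.Prime] {ζ : K} (hζ : IsPrimitiveRoot ζ p) {P : ℚ[X]}
    (hdeg : P.natDegree < p) (hP : aeval ζ P = 0) (hP1 : P.eval 1 = p) :
    P = cyclotomic p ℚ := by
  have hΦ : cyclotomic p ℚ = minpoly ℚ ζ := cyclotomic_eq_minpoly_rat hζ hp.out.pos
  set c := P.coeff (p - 1)
  have hΦdeg : (cyclotomic p ℚ).natDegree = p - 1 := by
    rw [natDegree_cyclotomic, Nat.totient_prime hp.out]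
  have hQ : P - C c * cyclotomic p ℚ = 0 := by
    refine eq_zero_of_dvd_of_degree_lt (p := cyclotomic p ℚ) ?_ ?_
    · rw [hΦ]
      exact minpoly.dvd ℚ ζ (by simp [hP])
    · rw [degree_eq_natDegree (cyclotomic_ne_zero p ℚ), hΦdeg, degree_lt_iff_coeff_zero]
      intro m hm
      rcases hm.eq_or_lt with rfl | hm
      · simp [coeff_C_mul, c, ← hΦdeg, (cyclotomic.monic p ℚ).coeff_natDegree]
      · rw [coeff_sub, coeff_C_mul, coeff_eq_zero_of_natDegree_lt (by omega),
          coeff_eq_zero_of_natDegree_lt (p := cyclotomic p ℚ) (by omega), mul_zero, sub_zero]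
  have hc : c = 1 := by
    have := congrArg (eval 1) hQ
    rw [eval_sub, eval_mul, eval_C, eval_one_cyclotomic_prime, hP1, eval_zero] at this
    have : (p : ℚ) ≠ 0 := by exact_mod_cast hp.out.ne_zero
    grind
  rw [sub_eq_zero, hc, C_1, one_mul] at hQ
  exact hQ

theorem Polynomial.coeff_cyclotomic_prime {R : Type*} [Ring R] {p : ℕ} [Fact p.Prime] {m : ℕ}
    (hm : m < p) : (cyclotomic p R).coeff m = 1 := by
  simp [cyclotomic_prime, coeff_X_pow, hm]

theorem injective_of_sum_eq_zero_of_pow_eq_one {p : ℕ} [hp : Fact p.Prime] {ι : Type*}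
    [Fintype ι] (hι : Fintype.card ι = p) {ξ : ι → ℂ} (hξ : ∀ t, ξ t ^ p = 1)
    (hsum : ∑ t, ξ t = 0) : Function.Injective ξ := by
  have hζ := Complex.isPrimitiveRoot_exp p hp.out.ne_zero
  have : NeZero p := ⟨hp.out.ne_zero⟩
  choose k hkp hk using fun t => hζ.eq_pow_of_pow_eq_one (hξ t)
  set P : ℚ[X] := ∑ t, X ^ k t
  have hPΦ : P = cyclotomic p ℚ := by
    refine hζ.eq_cyclotomic_of_aeval_eq_zero ?_ ?_ ?_
    · refine lt_of_le_of_lt (natDegree_sum_le_of_forall_le _ _ (n := p - 1) fun t _ => ?_)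
        (Nat.sub_lt hp.out.pos one_pos)
      rw [natDegree_X_pow]
      exact Nat.le_sub_one_of_lt (hkp t)
    · simp [P, hk, hsum]
    · simp [P, eval_finsetSum, hι]
  have hfiber (t : ι) : #{s | k t = k s} = 1 := by
    have := congrArg (coeff · (k t)) hPΦ
    simp only [P, finsetSum_coeff, coeff_X_pow, coeff_cyclotomic_prime (hkp t)] at this
    rw [sum_boole] at this
    exact_mod_cast this
  intro t s hts
  have hkts : k t = k s := hζ.pow_inj (hkp t) (hkp s) (by rw [hk, hk, hts])
  exact Finset.card_le_one.mp (hfiber t).le t (by simp) s (by simp [hkts])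

namespace AddChar

variable {G : Type*} [AddCommGroup G] [Fintype G]

theorem eq_zero_of_forall_sum_mul_eq_zero {g : G → ℂ}
    (h : ∀ ψ : AddChar G ℂ, ∑ v, g v * ψ v = 0) : g = 0 := by
  classical
  ext a
  have hcard : (Fintype.card G : ℂ) ≠ 0 := by exact_mod_cast Fintype.card_ne_zero
  suffices (Fintype.card G : ℂ) * g a = 0 by simpa [hcard] using this
  calc (Fintype.card G : ℂ) * g a
      = ∑ v, g v * ∑ ψ : AddChar G ℂ, ψ (v - a) := by
        simp [sum_apply_eq_ite, sub_eq_zero, mul_comm]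
    _ = ∑ ψ : AddChar G ℂ, ψ (-a) * ∑ v, g v * ψ v := by
        simp_rw [mul_sum, sub_eq_add_neg, map_add_eq_mul]
        rw [sum_comm]
        refine sum_congr rfl fun _ _ => sum_congr rfl fun _ _ => by ring
    _ = 0 := by simp [h]

theorem sum_comp_add_right_mul (ψ : AddChar G ℂ) (g : G → ℂ) (b : G) :
    ∑ v, g (v + b) * ψ v = ψ (-b) * ∑ v, g v * ψ v := by
  calc ∑ v, g (v + b) * ψ v = ∑ v, g v * ψ (v - b) :=
        Fintype.sum_equiv (Equiv.addRight b) _ _ fun v => by simp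
    _ = ψ (-b) * ∑ v, g v * ψ v := by
        rw [mul_sum]
        refine sum_congr rfl fun v _ => ?_
        rw [sub_eq_add_neg, map_add_eq_mul]
        ring

theorem eq_zero_of_sum_comp_add_eq_zero {ι : Type*} [Fintype ι] {g : G → ℂ} {e : G}
    (B : ι → G) (hg : ∀ v, g (v + e) = g v) (hB : ∀ v, ∑ t, g (v + B t) = 0)
    (hψ : ∀ ψ : AddChar G ℂ, ψ e = 1 → ∑ t, ψ (B t) ≠ 0) : g = 0 := by
  refine eq_zero_of_forall_sum_mul_eq_zero fun ψ => ?_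
  by_cases he : ψ e = 1
  · have hmul : (∑ t, ψ⁻¹ (B t)) * ∑ v, g v * ψ v = 0 :=
      calc (∑ t, ψ⁻¹ (B t)) * ∑ v, g v * ψ v = ∑ t, ∑ v, g (v + B t) * ψ v := by
            simp [sum_mul, sum_comp_add_right_mul]
        _ = ∑ v, (∑ t, g (v + B t)) * ψ v := by
            rw [sum_comm]
            simp [sum_mul]
        _ = 0 := by simp [hB]
    refine (mul_eq_zero.mp hmul).resolve_left (hψ _ ?_)
    rw [inv_apply', he, inv_one]
  · have hper : ∑ v, g v * ψ v = ψ (-e) * ∑ v, g v * ψ v := by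
      simp_rw [← sum_comp_add_right_mul, hg]
    have hne : ψ (-e) ≠ 1 := by rwa [map_neg_eq_inv, inv_ne_one]
    exact (mul_eq_zero.mp (by linear_combination hper : (1 - ψ (-e)) * _ = 0)).resolve_left
      (sub_ne_zero.mpr hne.symm)

end AddChar

section LineCount

variable {ι : Type*} [DecidableEq ι] {m : ℕ} [NeZero m]

noncomputable def lineCount (S : Set (ι → ZMod m)) (i : ι) (v : ι → ZMod m) : ℂ :=
  ∑ s, S.indicator (fun _ => 1) (v + Pi.single i s)

theorem lineCount_add_single (S : Set (ι → ZMod m)) (i : ι) (v : ι → ZMod m) (t : ZMod m) :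
    lineCount S i (v + Pi.single i t) = lineCount S i v := by
  unfold lineCount
  simp_rw [add_assoc, ← Pi.single_add]
  exact Fintype.sum_equiv (Equiv.addLeft t) _ _ fun _ => rfl

theorem ncard_inter_line_eq_lineCount (S : Set (ι → ZMod m)) (i : ι) (x : ι → ZMod m) :
    ((S ∩ {y | ∀ j, j ≠ i → y j = x j}).ncard : ℂ) = lineCount S i x := by
  have hline : S ∩ {y | ∀ j, j ≠ i → y j = x j} =
      (fun s => x + Pi.single i s) '' {s | x + Pi.single i s ∈ S} := by
    ext y
    constructor
    · rintro ⟨hyS, hy⟩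
      have hxy : x + Pi.single i (y i - x i) = y := by
        ext j
        by_cases hj : j = i
        · subst hj; simp
        · simp [hj, hy j hj]
      exact ⟨_, show x + Pi.single i (y i - x i) ∈ S by rwa [hxy], hxy⟩
    · rintro ⟨s, hs, rfl⟩
      exact ⟨hs, fun j hj => by simp [hj]⟩
  have hinj : Function.Injective fun s => x + Pi.single i s := fun s t h => by
    simpa using congrFun h i
  classical
  rw [hline, Set.ncard_image_of_injective _ hinj, Set.ncard_eq_toFinset_card', lineCount]
  simp [Set.indicator_apply]

end LineCount

section PerfectDomination

variable {n : ℕ}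

def closedNbhdOffset (n : ℕ) : Option (Fin n × Bool) → Fin n → ZMod (2 * n + 1)
  | none => 0
  | some (j, true) => Pi.single j 1
  | some (j, false) => -Pi.single j 1

theorem closedNbhdOffset_injective : Function.Injective (closedNbhdOffset n) := by
  rcases Nat.eq_zero_or_pos n with rfl | hn
  · exact fun o o' _ => Subsingleton.elim o o'
  have : Fact (1 < 2 * n + 1) := ⟨by omega⟩
  have : Fact (2 < 2 * n + 1) := ⟨by omega⟩
  rintro (_ | ⟨j, _ | _⟩) (_ | ⟨k, _ | _⟩) h <;>
    simp [closedNbhdOffset, funext_iff, Pi.single_apply] at h ⊢ <;>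
    have hj := h j <;> by_cases hjk : j = k <;>
    simp [hjk, ZMod.neg_one_ne_one, ZMod.neg_one_ne_one.symm] at hj ⊢

theorem dominates_iff_exists_closedNbhdOffset {u v : Fin n → ZMod (2 * n + 1)} :
    (u = v ∨ (cay n).Adj u v) ↔ ∃ o, u = v + closedNbhdOffset n o := by
  constructor
  · rintro (rfl | ⟨j, hj | hj⟩)
    · exact ⟨none, by simp [closedNbhdOffset]⟩
    · exact ⟨some (j, true), by rw [closedNbhdOffset]; linear_combination hj⟩
    · exact ⟨some (j, false), by rw [closedNbhdOffset]; linear_combination -hj⟩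
  · rintro ⟨(_ | ⟨j, _ | _⟩), rfl⟩
    · simp [closedNbhdOffset]
    · exact Or.inr ⟨j, Or.inr (by simp [closedNbhdOffset])⟩
    · exact Or.inr ⟨j, Or.inl (by simp [closedNbhdOffset])⟩

theorem PerfDom.sum_indicator_add_closedNbhdOffset {S : Set (Fin n → ZMod (2 * n + 1))}
    (hS : PerfDom (cay n) S) (v : Fin n → ZMod (2 * n + 1)) :
    ∑ o, S.indicator (fun _ => (1 : ℂ)) (v + closedNbhdOffset n o) = 1 := by
  obtain ⟨u, ⟨huS, huv⟩, huniq⟩ := hS v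
  obtain ⟨o₀, rfl⟩ := dominates_iff_exists_closedNbhdOffset.mp huv
  rw [sum_eq_single o₀ _ (by simp), Set.indicator_of_mem huS]
  intro o _ ho
  refine Set.indicator_of_notMem (fun hoS => ho (closedNbhdOffset_injective ?_)) _
  exact add_left_cancel (huniq _ ⟨hoS, dominates_iff_exists_closedNbhdOffset.mpr ⟨o, rfl⟩⟩)

theorem sum_lineCount_add_closedNbhdOffset {S : Set (Fin n → ZMod (2 * n + 1))}
    (hS : PerfDom (cay n) S) (i : Fin n) (v : Fin n → ZMod (2 * n + 1)) :
    ∑ o, lineCount S i (v + closedNbhdOffset n o) = 2 * n + 1 := by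
  unfold lineCount
  rw [sum_comm]
  have hball (s : ZMod (2 * n + 1)) :
      ∑ o, S.indicator (fun _ => (1 : ℂ)) (v + closedNbhdOffset n o + Pi.single i s) = 1 := by
    refine (sum_congr rfl fun o _ => ?_).trans
      (hS.sum_indicator_add_closedNbhdOffset (v + Pi.single i s))
    rw [add_right_comm]
  simp [hball]

theorem sum_addChar_closedNbhdOffset_ne_zero (hp : (2 * n + 1).Prime) (i : Fin n)
    {ψ : AddChar (Fin n → ZMod (2 * n + 1)) ℂ} (hψ : ψ (Pi.single i 1) = 1) :
    ∑ o, ψ (closedNbhdOffset n o) ≠ 0 := by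
  have : Fact (2 * n + 1).Prime := ⟨hp⟩
  intro hsum
  have hpow (o) : ψ (closedNbhdOffset n o) ^ (2 * n + 1) = 1 := by
    rw [← AddChar.map_nsmul_eq_pow, ← Nat.cast_smul_eq_nsmul (ZMod (2 * n + 1)), ZMod.natCast_self,
      zero_smul, AddChar.map_zero_eq_one]
  have hcard : Fintype.card (Option (Fin n × Bool)) = 2 * n + 1 := by simp [mul_comm]
  have := injective_of_sum_eq_zero_of_pow_eq_one hcard hpow hsum
    (a₁ := none) (a₂ := some (i, true)) (by simp [closedNbhdOffset, hψ])
  exact Option.some_ne_none _ this.symm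

theorem lineCount_eq_one (hp : (2 * n + 1).Prime) {S : Set (Fin n → ZMod (2 * n + 1))}
    (hS : PerfDom (cay n) S) (i : Fin n) (v : Fin n → ZMod (2 * n + 1)) :
    lineCount S i v = 1 := by
  have h := AddChar.eq_zero_of_sum_comp_add_eq_zero (g := fun w => lineCount S i w - 1)
    (closedNbhdOffset n) (fun w => by simp [lineCount_add_single])
    (fun w => by simp [sum_lineCount_add_closedNbhdOffset hS]; ring)
    (fun _ => sum_addChar_closedNbhdOffset_ne_zero hp i)
  simpa [sub_eq_zero] using congrFun h v

end PerfectDomination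

/-- If `p = 2n+1` is prime and `S` is a perfect dominating set of
`Γ(ℤ_pⁿ, 𝒰)`, then every axis-parallel line meets `S` in exactly one point. -/
theorem stmt4 (n : ℕ) (hp : Nat.Prime (2 * n + 1))
    (S : Set (Fin n → ZMod (2 * n + 1))) (hS : PerfDom (cay n) S)
    (x : Fin n → ZMod (2 * n + 1)) (i : Fin n) :
    (S ∩ {y : Fin n → ZMod (2 * n + 1) | ∀ j, j ≠ i → y j = x j}).ncard = 1 := by
  exact_mod_cast (ncard_inter_line_eq_lineCount S i x).trans (lineCount_eq_one hp hS i x)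
end

section
/- Let p = 2n+1 be prime. The span (over ℂ) of the characteristic vectors of all perfect dominating sets of Γ(ℤ_pⁿ, 𝒰) has dimension at most 1 + n!·2ⁿ. -/
/-!
For a perfect dominating set `S`, the closed-neighbourhood operator `N = 1 + A` sends the
indicator of `S` to the all-ones vector, so the span lies in `N⁻¹(ℂ ∙ 1)` and has dimension at
most `1 + dim ker N`. The graph is a Cayley graph of `ℤ_pⁿ`, so the additive characters `ψ` form
an eigenbasis of `N`, with eigenvalue `∑ ψ d` over the closed neighbourhood `{0, ±eᵢ}` of `0`.
That eigenvalue is a sum of `p` roots of unity of order dividing `p`; as `p` is prime, the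
`ℚ`-relations among `1, ζ, …, ζ^(p-1)` are the multiples of `1 + ζ + ⋯ + ζ^(p-1) = 0`, so the
eigenvalue is `0` only when these `p` roots are pairwise distinct. Then the `ψ eᵢ` are `n` roots
`≠ 1`, no two equal or inverse to each other, lying in distinct pairs `{ζᵏ, ζ⁻ᵏ}`, `1 ≤ k ≤ n`:
at most `n! 2ⁿ` choices.
-/

open Finset Module Matrix Polynomial

theorem LinearMap.finrank_comap_le {K V W : Type*} [Field K] [AddCommGroup V] [Module K V]
    [FiniteDimensional K V] [AddCommGroup W] [Module K W] [FiniteDimensional K W]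
    (f : V →ₗ[K] W) (q : Submodule K W) :
    finrank K (q.comap f) ≤ finrank K q + finrank K (LinearMap.ker f) := by
  have h := f.lift_rank_comap_le q
  simp only [← finrank_eq_rank, Cardinal.lift_natCast] at h
  exact_mod_cast h

theorem Module.Basis.finrank_ker_le_card {K V ι : Type*} [Field K] [AddCommGroup V] [Module K V]
    [Finite ι] (b : Basis ι K V) {T : V →ₗ[K] V} {μ : ι → K} (hT : ∀ i, T (b i) = μ i • b i) :
    finrank K (LinearMap.ker T) ≤ Nat.card {i // μ i = 0} := by
  classical
  have : Fintype ι := Fintype.ofFinite ι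
  have : FiniteDimensional K V := .of_basis b
  have hcoord (i : ι) : b.coord i ∘ₗ T = μ i • b.coord i :=
    b.ext fun j => by
      by_cases hij : j = i
      · subst hij; simp [hT]
      · simp [hT, Ne.symm hij]
  have hker : LinearMap.ker T ≤ Submodule.span K (b '' {i | μ i = 0}) := by
    intro f hf
    rw [b.mem_span_image]
    intro i hi
    have h := LinearMap.congr_fun (hcoord i) f
    simp only [LinearMap.comp_apply, LinearMap.mem_ker.mp hf, map_zero, LinearMap.smul_apply,
      Basis.coord_apply, smul_eq_mul, zero_eq_mul] at h
    exact h.resolve_right (Finsupp.mem_support_iff.mp hi)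
  calc finrank K (LinearMap.ker T) ≤ finrank K (Submodule.span K (b '' {i | μ i = 0})) :=
        Submodule.finrank_mono hker
    _ ≤ Nat.card {i // μ i = 0} := by
        rw [Set.image_eq_range, Nat.card_eq_fintype_card]
        exact finrank_range_le_card _

theorem finrank_ker_le_card_addChar {A ι : Type*} [AddCommGroup A] [Finite A] [Fintype ι]
    (d : ι → A) {T : (A → ℂ) →ₗ[ℂ] A → ℂ} (hT : ∀ f x, T f x = ∑ j, f (x + d j)) :
    finrank ℂ (LinearMap.ker T) ≤ Nat.card {ψ : AddChar A ℂ // ∑ j, ψ (d j) = 0} :=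
  (AddChar.complexBasis A).finrank_ker_le_card fun ψ => funext fun x => by
    simp [hT, AddChar.map_add_eq_mul, ← Finset.mul_sum, mul_comm]

theorem IsPrimitiveRoot.injective_of_sum_eq_zero {K : Type*} [Field K] [CharZero K] {p : ℕ}
    [hp : Fact p.Prime] {ζ : K} (hζ : IsPrimitiveRoot ζ p) {ι : Type*} [Fintype ι]
    (hι : Fintype.card ι = p) {w : ι → K} (hw : ∀ j, w j ^ p = 1) (hsum : ∑ j, w j = 0) :
    Function.Injective w := by
  classical
  choose k hk hkw using fun j => hζ.eq_pow_of_pow_eq_one (hw j)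
  set P : ℚ[X] := ∑ j, X ^ k j
  have hcoeff (m : ℕ) : P.coeff m = #{j | k j = m} := by
    simp [P, coeff_X_pow, eq_comm]
  have hdvd : cyclotomic p ℚ ∣ P := by
    rw [cyclotomic_eq_minpoly_rat hζ hp.out.pos]
    exact minpoly.dvd ℚ ζ (by simp [P, hkw, hsum])
  have hdeg : P.natDegree ≤ (cyclotomic p ℚ).natDegree := by
    rw [natDegree_cyclotomic, Nat.totient_prime hp.out]
    exact natDegree_sum_le_of_forall_le _ _ fun j _ => by
      rw [natDegree_X_pow]; have := hk j; omega
  have hPeq :=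
    eq_mul_leadingCoeff_of_monic_of_dvd_of_natDegree_le (cyclotomic.monic p ℚ) hdvd hdeg
  have hlead : P.leadingCoeff = 1 := by
    have h1 := congrArg (eval 1) hPeq
    simp only [eval_mul, eval_C, eval_one_cyclotomic_prime] at h1
    have hP1 : P.eval 1 = p := by simp [P, eval_finsetSum, hι]
    rw [hP1] at h1
    have : (p : ℚ) ≠ 0 := by exact_mod_cast hp.out.ne_zero
    exact (mul_eq_left₀ this).mp h1.symm
  rw [hlead, map_one, mul_one, cyclotomic_prime] at hPeq
  intro i j hij
  have hfiber : #{l | k l = k i} = 1 := by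
    simpa [hPeq, coeff_X_pow, hk i] using (hcoeff (k i)).symm
  have hkij : k i = k j := hζ.pow_inj (hk i) (hk j) (by rw [hkw, hkw, hij])
  exact Finset.card_le_one.mp hfiber.le i (by simp) j (by simp [hkij])

theorem IsPrimitiveRoot.mem_or_inv_mem_image_pow {K : Type*} [Field K] [DecidableEq K] {n : ℕ}
    {ζ z : K}
    (hζ : IsPrimitiveRoot ζ (2 * n + 1)) (hz : z ^ (2 * n + 1) = 1) (hz1 : z ≠ 1) :
    z ∈ (Icc 1 n).image (ζ ^ ·) ∨ z⁻¹ ∈ (Icc 1 n).image (ζ ^ ·) := by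
  obtain ⟨k, hk, rfl⟩ := hζ.eq_pow_of_pow_eq_one hz
  have hk0 : k ≠ 0 := by rintro rfl; exact hz1 (pow_zero ζ)
  by_cases hkn : k ≤ n
  · exact .inl (mem_image.mpr ⟨k, mem_Icc.mpr (by omega), rfl⟩)
  · refine .inr (mem_image.mpr ⟨2 * n + 1 - k, mem_Icc.mpr (by omega), ?_⟩)
    refine eq_inv_of_mul_eq_one_left ?_
    rw [← pow_add, Nat.sub_add_cancel hk.le, hζ.pow_eq_one]

theorem IsPrimitiveRoot.card_image_pow_Icc {K : Type*} [Field K] [DecidableEq K] {n : ℕ} {ζ : K}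
    (hζ : IsPrimitiveRoot ζ (2 * n + 1)) : #((Icc 1 n).image (ζ ^ ·)) = n := by
  rw [card_image_of_injOn fun a ha b hb hab =>
    hζ.pow_inj (by simp at ha; omega) (by simp at hb; omega) hab]
  simp

theorem card_le_descFactorial_mul_two_pow {β ι α : Type*} [Fintype ι] [DecidableEq α]
    [InvolutiveInv α] (R : Finset α) {z : β → ι → α} (hz : Function.Injective z)
    (hR : ∀ b i, z b i ∈ R ∨ (z b i)⁻¹ ∈ R)
    (hinj : ∀ b i j, z b i = z b j ∨ z b i = (z b j)⁻¹ → i = j) :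
    Nat.card β ≤ (#R).descFactorial (Fintype.card ι) * 2 ^ Fintype.card ι := by
  classical
  let r (b : β) (i : ι) : α := if z b i ∈ R then z b i else (z b i)⁻¹
  have hrR (b : β) (i : ι) : r b i ∈ R := by
    unfold r; split_ifs with h
    · exact h
    · exact (hR b i).resolve_left h
  have hr (b : β) : Function.Injective (r b) := by
    intro i j hij
    apply hinj b i j
    unfold r at hij
    split_ifs at hij <;> simp_all [inv_eq_iff_eq_inv]
  let F (b : β) : (ι ↪ R) × (ι → Bool) :=
    (⟨fun i => ⟨r b i, hrR b i⟩, fun i j h => hr b (congrArg Subtype.val h)⟩,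
      fun i => decide (z b i ∈ R))
  have hF : Function.Injective F := by
    intro b c hbc
    obtain ⟨hrbc, hsbc⟩ := Prod.mk.inj hbc
    refine hz (funext fun i => ?_)
    have hri : r b i = r c i := congrArg Subtype.val (DFunLike.congr_fun hrbc i)
    have hsi : z b i ∈ R ↔ z c i ∈ R := by simpa [F] using congrFun hsbc i
    unfold r at hri
    split_ifs at hri <;> simp_all
  calc Nat.card β ≤ Nat.card ((ι ↪ R) × (ι → Bool)) := Nat.card_le_card_of_injective F hF
    _ = _ := by
      simp [Nat.card_eq_fintype_card, Fintype.card_embedding_eq]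

theorem AddChar.ext_pi_single {ι M : Type*} [Finite ι] [DecidableEq ι] {m : ℕ} [NeZero m]
    [CommMonoid M] {ψ φ : AddChar (ι → ZMod m) M}
    (h : ∀ i, ψ (Pi.single i 1) = φ (Pi.single i 1)) : ψ = φ := by
  have hsingle (i : ι) (x : ZMod m) : ψ (Pi.single i x) = φ (Pi.single i x) := by
    rw [← ZMod.natCast_zmod_val x, ← nsmul_one, Pi.single_smul, AddChar.map_nsmul_eq_pow,
      AddChar.map_nsmul_eq_pow, h]
  have := AddMonoidHom.functions_ext _ ψ.toAddMonoidHom φ.toAddMonoidHom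
    fun i x => congrArg Additive.ofMul (hsingle i x)
  ext x
  exact congrArg Additive.toMul (DFunLike.congr_fun this x)

section PerfectDomination

variable {V : Type*} [Fintype V] [DecidableEq V] {G : SimpleGraph V} [DecidableRel G.Adj]

theorem PerfDom.one_add_adjMatrix_mulVec_indicator {S : Set V} (hS : PerfDom G S) :
    (1 + G.adjMatrix ℂ) *ᵥ S.indicator (fun _ => 1) = fun _ => 1 := by
  classical
  funext x
  obtain ⟨u, hu, huniq⟩ := hS x
  have hclosed : {v ∈ insert x (G.neighborFinset x) | v ∈ S} = {u} := by
    refine Finset.eq_singleton_iff_unique_mem.mpr ⟨?_, fun v hv => huniq v ?_⟩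
    · grind [SimpleGraph.mem_neighborFinset, SimpleGraph.adj_comm]
    · grind [SimpleGraph.mem_neighborFinset, SimpleGraph.adj_comm]
  rw [Matrix.add_mulVec, Matrix.one_mulVec, Pi.add_apply, SimpleGraph.adjMatrix_mulVec_apply,
    ← Finset.sum_insert (G.notMem_neighborFinset_self x)]
  simp [Set.indicator_apply, Finset.sum_boole, hclosed]

variable (G) in
theorem finrank_span_indicator_perfDom_le :
    finrank ℂ (Submodule.span ℂ {f : V → ℂ | ∃ S, PerfDom G S ∧ f = S.indicator fun _ => 1})
      ≤ 1 + finrank ℂ (LinearMap.ker (Matrix.toLin' (1 + G.adjMatrix ℂ))) := by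
  have hspan : Submodule.span ℂ {f : V → ℂ | ∃ S, PerfDom G S ∧ f = S.indicator fun _ => 1}
      ≤ (Submodule.span ℂ {fun _ => 1}).comap (Matrix.toLin' (1 + G.adjMatrix ℂ)) := by
    rw [Submodule.span_le]
    rintro f ⟨S, hS, rfl⟩
    rw [SetLike.mem_coe, Submodule.mem_comap, Matrix.toLin'_apply,
      hS.one_add_adjMatrix_mulVec_indicator]
    exact Submodule.mem_span_singleton_self _
  have hone : finrank ℂ (Submodule.span ℂ {fun _ : V => (1 : ℂ)}) ≤ 1 :=
    (finrank_span_le_card _).trans (by rw [Set.toFinset_singleton, Finset.card_singleton])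
  calc _ ≤ _ := Submodule.finrank_mono hspan
    _ ≤ _ := LinearMap.finrank_comap_le _ _
    _ ≤ _ := Nat.add_le_add_right hone _

end PerfectDomination

def cayStep (n : ℕ) : Option (Fin n ⊕ Fin n) → Fin n → ZMod (2 * n + 1)
  | none => 0
  | some (.inl i) => Pi.single i 1
  | some (.inr i) => -Pi.single i 1

theorem cayStep_injective (n : ℕ) : Function.Injective (cayStep n) := by
  rcases Nat.eq_zero_or_pos n with rfl | hn
  · exact Function.injective_of_subsingleton _
  have : Fact (1 < 2 * n + 1) := ⟨by omega⟩
  have : Fact (2 < 2 * n + 1) := ⟨by omega⟩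
  rintro (_ | i | i) (_ | j | j) h <;> simp [cayStep, funext_iff, Pi.single_apply] at h ⊢
  · simpa using h i
  · have hi := h i
    rw [if_pos rfl] at hi
    by_cases hij : i = j
    · rw [if_pos hij] at hi; exact ZMod.neg_one_ne_one hi.symm
    · rw [if_neg hij, neg_zero] at hi; exact one_ne_zero hi
  · have hj := h j
    rw [if_pos rfl] at hj
    by_cases hji : j = i
    · rw [if_pos hji] at hj; exact ZMod.neg_one_ne_one hj
    · rw [if_neg hji, neg_zero] at hj; exact zero_ne_one hj
  · simpa using h i

theorem cay_adj_iff {n : ℕ} {x y : Fin n → ZMod (2 * n + 1)} :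
    (cay n).Adj x y ↔ ∃ i, x - y = Pi.single i 1 ∨ y - x = Pi.single i 1 := Iff.rfl

theorem cay_neighborFinset (n : ℕ) (x : Fin n → ZMod (2 * n + 1)) :
    (cay n).neighborFinset x =
      univ.map ⟨fun j => x + cayStep n (some j), (add_right_injective x).comp
        ((cayStep_injective n).comp (Option.some_injective _))⟩ := by
  ext u
  simp only [SimpleGraph.mem_neighborFinset, cay_adj_iff, mem_map, mem_univ, true_and,
    Function.Embedding.coeFn_mk]
  constructor
  · rintro ⟨i, h | h⟩
    · exact ⟨.inr i, by simp only [cayStep, ← h]; abel⟩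
    · exact ⟨.inl i, by simp only [cayStep, ← h]; abel⟩
  · rintro ⟨i | i, rfl⟩
    · exact ⟨i, Or.inr (by simp [cayStep])⟩
    · exact ⟨i, Or.inl (by simp [cayStep])⟩

theorem one_add_adjMatrix_cay_mulVec (n : ℕ) (f : (Fin n → ZMod (2 * n + 1)) → ℂ)
    (x : Fin n → ZMod (2 * n + 1)) :
    ((1 + (cay n).adjMatrix ℂ) *ᵥ f) x = ∑ j, f (x + cayStep n j) := by
  rw [add_mulVec, one_mulVec, Pi.add_apply, SimpleGraph.adjMatrix_mulVec_apply,
    cay_neighborFinset, sum_map, Fintype.sum_option]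
  simp [cayStep]

theorem card_addChar_sum_cayStep_eq_zero_le {n : ℕ} (hp : (2 * n + 1).Prime) :
    Nat.card {ψ : AddChar (Fin n → ZMod (2 * n + 1)) ℂ // ∑ j, ψ (cayStep n j) = 0}
      ≤ n.factorial * 2 ^ n := by
  have : Fact (2 * n + 1).Prime := ⟨hp⟩
  have hζ := Complex.isPrimitiveRoot_exp (2 * n + 1) (by omega)
  have hpow (ψ : AddChar (Fin n → ZMod (2 * n + 1)) ℂ) (x) : ψ x ^ (2 * n + 1) = 1 := by
    rw [← AddChar.map_nsmul_eq_pow]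
    convert ψ.map_zero_eq_one
    ext i
    simp
  have hw (ψ : {ψ : AddChar (Fin n → ZMod (2 * n + 1)) ℂ // ∑ j, ψ (cayStep n j) = 0}) :
      Function.Injective (ψ.1 ∘ cayStep n) :=
    hζ.injective_of_sum_eq_zero (by simp; ring) (fun j => hpow _ _) ψ.2
  have key := card_le_descFactorial_mul_two_pow ((Icc 1 n).image (_ ^ ·))
    (z := fun (ψ : {ψ : AddChar (Fin n → ZMod (2 * n + 1)) ℂ // ∑ j, ψ (cayStep n j) = 0}) i =>
      ψ.1 (Pi.single i 1))
    (fun ψ φ h => Subtype.ext (AddChar.ext_pi_single fun i => congrFun h i))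
    (fun ψ i => hζ.mem_or_inv_mem_image_pow (hpow _ _) fun h1 => by
      simpa [cayStep] using @hw ψ (some (.inl i)) none (by simpa [cayStep] using h1))
    (fun ψ i j hij => by
      rcases hij with h | h
      · simpa [cayStep] using @hw ψ (some (.inl i)) (some (.inl j)) h
      · rw [← AddChar.map_neg_eq_inv] at h
        simpa [cayStep] using @hw ψ (some (.inl i)) (some (.inr j)) h)
  rwa [hζ.card_image_pow_Icc, Fintype.card_fin, Nat.descFactorial_self] at key

/-- For `p = 2n+1` prime, the span over `ℂ` of the characteristic
vectors of all perfect dominating sets of `Γ(ℤ_pⁿ, 𝒰)` has dimension at most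
`1 + n!·2ⁿ`. -/
theorem stmt9 (n : ℕ) (hp : Nat.Prime (2 * n + 1)) :
    Module.finrank ℂ (Submodule.span ℂ
        {f : (Fin n → ZMod (2 * n + 1)) → ℂ |
          ∃ S : Set (Fin n → ZMod (2 * n + 1)), PerfDom (cay n) S ∧
            f = S.indicator (fun _ => (1 : ℂ))})
      ≤ 1 + n.factorial * 2 ^ n := by
  calc _ ≤ 1 + finrank ℂ (LinearMap.ker (toLin' (1 + (cay n).adjMatrix ℂ))) :=
        finrank_span_indicator_perfDom_le (cay n)
    _ ≤ 1 + Nat.card {ψ : AddChar (Fin n → ZMod (2 * n + 1)) ℂ // ∑ j, ψ (cayStep n j) = 0} :=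
        Nat.add_le_add_left (finrank_ker_le_card_addChar (cayStep n) fun f x => by
          rw [toLin'_apply, one_add_adjMatrix_cay_mulVec]) 1
    _ ≤ 1 + n.factorial * 2 ^ n := Nat.add_le_add_left (card_addChar_sum_cayStep_eq_zero_le hp) 1
end

section
/- Let p = 2n+1 be prime, let S be a perfect dominating set of Γ(ℤ_pⁿ, 𝒰) with characteristic function f : ℤ_pⁿ → {0,1}, and define the Fourier coefficients f̂(y) = (1/pⁿ)·Σ_{x ∈ ℤ_pⁿ} f(x)·ω^{−Σᵢ xᵢyᵢ} with ω = e^{2πi/p}. Then for every y ≠ 0 with f̂(y) ≠ 0, one has {y₁,…,yₙ} ∪ {−y₁,…,−yₙ} = {1,…,2n} as residues mod p. -/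
/-!
Let `f` be the indicator of `S` and `ψ x = ω ^ (-(x ⬝ᵥ y))`. Perfect domination says that the
translates by `S` of the closed neighbourhood `{0, ±e₁, …, ±eₙ}` tile the group, i.e.
`∑ₜ f (v + dₜ) = 1` for every `v`. Pairing this with the nontrivial character `ψ` gives
`f̂(y) · (1 + ∑ᵢ (ω ^ yᵢ + ω ^ (-yᵢ))) = 0`, so if `f̂(y) ≠ 0` the `p` residues `0, ±y₁, …, ±yₙ`
have vanishing `ω`-power sum. Since the minimal polynomial of `ω` over `ℚ` is
`1 + X + ⋯ + X ^ (p - 1)`, all residues then occur with the same multiplicity, i.e. exactly once.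
-/

open Finset Function Polynomial

theorem IsPrimitiveRoot.coeff_eq_of_sum_mul_pow_val_eq_zero {K : Type*} [Field K] [CharZero K]
    {p : ℕ} [hp : Fact p.Prime] {ω : K} (hω : IsPrimitiveRoot ω p) {c : ZMod p → ℚ}
    (h : ∑ j, (c j : K) * ω ^ j.val = 0) (i j : ZMod p) : c i = c j := by
  set P : ℚ[X] := ∑ j : ZMod p, C (c j) * X ^ j.val
  have hcoeff (k : ZMod p) : P.coeff k.val = c k := by
    simp [P, coeff_C_mul, coeff_X_pow, ZMod.val_injective p |>.eq_iff]
  have hdvd : cyclotomic p ℚ ∣ P := by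
    rw [cyclotomic_eq_minpoly_rat hω hp.out.pos]
    exact minpoly.dvd ℚ ω (by simpa [P] using h)
  have hdeg : P.natDegree ≤ (cyclotomic p ℚ).natDegree := by
    rw [natDegree_cyclotomic, Nat.totient_prime hp.out]
    refine natDegree_sum_le_of_forall_le _ _ fun k _ => (natDegree_C_mul_le _ _).trans ?_
    have := ZMod.val_lt k
    rw [natDegree_X_pow]
    omega
  have hΦ (k : ZMod p) : (cyclotomic p ℚ).coeff k.val = 1 := by
    simp [cyclotomic_prime, coeff_X_pow, ZMod.val_lt k]
  have hP := eq_leadingCoeff_mul_of_monic_of_dvd_of_natDegree_le (cyclotomic.monic p ℚ) hdvd hdeg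
  rw [← hcoeff i, ← hcoeff j, hP, coeff_C_mul, coeff_C_mul, hΦ, hΦ]

theorem IsPrimitiveRoot.bijective_of_sum_pow_val_eq_zero {K : Type*} [Field K] [CharZero K]
    {p : ℕ} [hp : Fact p.Prime] {ω : K} (hω : IsPrimitiveRoot ω p) {ι : Type*} [Fintype ι]
    {g : ι → ZMod p} (hcard : Fintype.card ι = p) (h : ∑ i, ω ^ (g i).val = 0) :
    Bijective g := by
  classical
  set c : ZMod p → ℚ := fun j => #{i | g i = j}
  have hc : ∑ j, (c j : K) * ω ^ j.val = 0 := by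
    rw [← h, ← Finset.sum_fiberwise univ g]
    refine Finset.sum_congr rfl fun j _ => ?_
    rw [Finset.sum_congr rfl fun i hi => by rw [(Finset.mem_filter.mp hi).2], Finset.sum_const,
      nsmul_eq_mul]
    simp [c]
  have hsum : ∑ j, c j = Fintype.card ι := by
    simp only [c, ← card_univ (α := ι)]
    exact_mod_cast (card_eq_sum_card_fiberwise (f := g) (s := univ) fun _ _ => mem_univ _).symm
  refine (Fintype.bijective_iff_surjective_and_card g).2 ⟨fun j => ?_, by simp [hcard]⟩
  by_contra hj
  have hc0 (k : ZMod p) : c k = 0 := by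
    rw [hω.coeff_eq_of_sum_mul_pow_val_eq_zero hc k j]
    simpa [c, Finset.filter_eq_empty_iff] using hj
  rw [Finset.sum_eq_zero fun k _ => hc0 k, hcard] at hsum
  exact hp.out.ne_zero (by exact_mod_cast hsum.symm)

theorem AddChar.sum_mul_sum_eq_zero_of_tiling {G R ι : Type*} [AddCommGroup G] [Fintype G]
    [CommRing R] [IsDomain R] [Fintype ι] {ψ : AddChar G R} (hψ : ψ ≠ 1) (f : G → R)
    (d : ι → G) (hf : ∀ v, ∑ t, f (v + d t) = 1) :
    (∑ x, f x * ψ x) * ∑ t, ψ (-d t) = 0 := by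
  calc (∑ x, f x * ψ x) * ∑ t, ψ (-d t)
      = ∑ t, ∑ x, f x * ψ (x - d t) := by
        simp only [Finset.sum_mul_sum, sub_eq_add_neg, map_add_eq_mul, mul_assoc]
        exact Finset.sum_comm
    _ = ∑ t, ∑ v, f (v + d t) * ψ v := by
        refine Finset.sum_congr rfl fun t _ => ?_
        exact Fintype.sum_equiv (Equiv.subRight (d t)) _ _ fun x => by simp
    _ = ∑ v, ψ v := by
        rw [Finset.sum_comm]
        simp [← Finset.sum_mul, hf]
    _ = 0 := AddChar.sum_eq_zero_of_ne_one hψ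

def unitOffset (ι R : Type*) [DecidableEq ι] [Ring R] : Option (ι ⊕ ι) → ι → R
  | none => 0
  | some (.inl i) => Pi.single i 1
  | some (.inr i) => -Pi.single i 1

theorem unitOffset_injective {ι R : Type*} [DecidableEq ι] [Ring R] (h2 : (2 : R) ≠ 0) :
    Injective (unitOffset ι R) := by
  have h1 : (1 : R) ≠ 0 := fun h => h2 (by rw [← one_add_one_eq_two, h, add_zero])
  have hneg : (1 : R) ≠ -1 := fun h => h2 (by rw [← one_add_one_eq_two]; nth_rw 2 [h]; simp)
  rintro (_ | i | i) (_ | j | j) h <;>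
    simp only [unitOffset, funext_iff, Pi.zero_apply, Pi.neg_apply, Pi.single_apply] at h
  all_goals first
    | rfl
    | (have := h j; grind)
    | (have := h i; grind)

theorem PerfDom.sum_indicator_eq_one {V ι R : Type*} [Fintype ι] [AddCommMonoid R] [One R]
    {G : SimpleGraph V} {S : Set V} (hS : PerfDom G S) {v : V} {D : ι → V} (hD : Injective D)
    (hnbhd : ∀ u, (u = v ∨ G.Adj u v) ↔ ∃ t, D t = u) :
    ∑ t, S.indicator (fun _ => (1 : R)) (D t) = 1 := by
  obtain ⟨u, ⟨huS, hu⟩, huniq⟩ := hS v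
  obtain ⟨t₀, rfl⟩ := (hnbhd u).1 hu
  rw [Fintype.sum_eq_single t₀ fun t ht => Set.indicator_of_notMem (fun hS' => ht (hD
    (huniq _ ⟨hS', (hnbhd _).2 ⟨t, rfl⟩⟩))) _, Set.indicator_of_mem huS]

theorem eq_or_cay_adj_iff {n : ℕ} (u v : Fin n → ZMod (2 * n + 1)) :
    (u = v ∨ (cay n).Adj u v) ↔ ∃ t, v + unitOffset (Fin n) (ZMod (2 * n + 1)) t = u := by
  constructor
  · rintro (rfl | ⟨i, h | h⟩)
    · exact ⟨none, add_zero u⟩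
    · exact ⟨some (.inl i), by rw [unitOffset, ← h, add_sub_cancel]⟩
    · exact ⟨some (.inr i), by rw [unitOffset, ← h, neg_sub, add_sub_cancel]⟩
  · rintro ⟨_ | i | i, rfl⟩
    · exact .inl (add_zero v)
    · exact .inr ⟨i, .inl (add_sub_cancel_left v _)⟩
    · exact .inr ⟨i, .inr (by simp [unitOffset])⟩

theorem Function.Bijective.range_comp_some {α β : Type*} {g : Option α → β} (hg : Bijective g) :
    Set.range (g ∘ some) = {b | b ≠ g none} := by
  ext b
  constructor
  · rintro ⟨a, rfl⟩
    exact fun h => Option.some_ne_none a (hg.1 h)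
  · intro hb
    obtain ⟨_ | a, rfl⟩ := hg.2 b
    · exact absurd rfl hb
    · exact ⟨a, rfl⟩

/-- Let `p = 2n+1` be prime, `S` a perfect dominating set of
`Γ(ℤ_pⁿ, 𝒰)` with characteristic function `f`, and
`f̂(y) = p⁻ⁿ Σₓ f(x)·ω^{−Σᵢ xᵢyᵢ}` its Fourier coefficients, `ω = e^{2πi/p}`.
Then for every `y ≠ 0` with `f̂(y) ≠ 0`, the `2n` residues `±y₁, …, ±yₙ` are pairwise
distinct and are exactly the nonzero residues `1, …, 2n` mod `p`. -/
theorem stmt15 (n : ℕ) (hp : Nat.Prime (2 * n + 1))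
    (S : Set (Fin n → ZMod (2 * n + 1))) (hS : PerfDom (cay n) S)
    (y : Fin n → ZMod (2 * n + 1)) (hy : y ≠ 0)
    (hfy : (1 / ((2 * n + 1 : ℕ) : ℂ) ^ n) *
        ∑ x : Fin n → ZMod (2 * n + 1),
          S.indicator (fun _ => (1 : ℂ)) x *
            Complex.exp (2 * Real.pi * Complex.I / (2 * n + 1)) ^ (-(∑ i, x i * y i)).val
      ≠ 0) :
    Function.Injective (Sum.elim y (fun i => -(y i))) ∧
      Set.range (Sum.elim y (fun i => -(y i))) = {z : ZMod (2 * n + 1) | z ≠ 0} := by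
  have : Fact (2 * n + 1).Prime := ⟨hp⟩
  have hω : IsPrimitiveRoot (Complex.exp (2 * Real.pi * Complex.I / (2 * n + 1))) (2 * n + 1) := by
    simpa using Complex.isPrimitiveRoot_exp (2 * n + 1) (by omega)
  let ψ : AddChar (Fin n → ZMod (2 * n + 1)) ℂ :=
    (AddChar.zmodChar _ hω.pow_eq_one).compAddMonoidHom
      (AddMonoidHom.mk' (fun x => -(x ⬝ᵥ y)) fun a b => by rw [add_dotProduct, neg_add])
  have hψ : ψ ≠ 1 := by
    obtain ⟨i, hi⟩ := Function.ne_iff.1 hy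
    refine AddChar.ne_one_iff.2 ⟨-Pi.single i 1, ?_⟩
    simpa [ψ, AddChar.zmodChar_apply] using
      hω.pow_ne_one_of_pos_of_lt ((ZMod.val_ne_zero _).2 hi) (ZMod.val_lt _)
  have h2 : (2 : ZMod (2 * n + 1)) ≠ 0 :=
    Ring.two_ne_zero (by rw [ZMod.ringChar_zmod_n]; omega)
  set d := unitOffset (Fin n) (ZMod (2 * n + 1))
  have hcode (v) : ∑ t, S.indicator (fun _ => (1 : ℂ)) (v + d t) = 1 :=
    hS.sum_indicator_eq_one ((add_right_injective v).comp (unitOffset_injective h2))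
      (eq_or_cay_adj_iff · v)
  have hsum : ∑ t, ψ (-d t) = 0 :=
    (mul_eq_zero.1 (AddChar.sum_mul_sum_eq_zero_of_tiling hψ _ d hcode)).resolve_left
      (right_ne_zero_of_mul hfy)
  set g : Option (Fin n ⊕ Fin n) → ZMod (2 * n + 1) := fun t => d t ⬝ᵥ y
  have hbij : Bijective g := hω.bijective_of_sum_pow_val_eq_zero (by simp; ring)
    (by simpa [ψ, AddChar.zmodChar_apply, neg_dotProduct] using hsum)
  have hg : g ∘ some = Sum.elim y (fun i => -(y i)) := by
    ext (i | i) <;> simp [g, d, unitOffset]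
  have hg0 : g none = 0 := by simp [g, d, unitOffset]
  rw [← hg, hbij.range_comp_some, hg0]
  exact ⟨hbij.1.comp (Option.some_injective _), rfl⟩
end
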